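/- arXiv:1111.2712 — 2 statements merged into one kernel-verified Lean document; each statement's English description precedes it below -/
import Mathlib

section
/- Let N ≥ 5 be an integer and let β be a real number with 0 < β < N - 4. Then the integral ∫_{ℝ^N} |x|^β (1-|x|²)/(1+|x|²)^{N+1} dx converges absolutely and is strictly negative. -/
/-!
In polar coordinates the integral is a positive multiple of `I(q) = ∫₀^∞ y^q w(y) dy`, where
`q = N - 1 + β` and `w(y) = (1 - y²) / (1 + y²)^(N+1)`. Since `w(1/y) = -y^(2N) w(y)`, the
substitution `y ↦ 1/y` gives `I(q) = -I(q')` with `q' = 2N - 2 - q < q`, hence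
`-2 I(q) = ∫₀^∞ (y^q' - y^q) w(y) dy`. As `w` is positive on `(0, 1)` and negative on `(1, ∞)`,
this last integrand is positive away from `y = 1`.
-/

open MeasureTheory Set Real Module

noncomputable def rationalWeight (n : ℕ) (y : ℝ) : ℝ := (1 - y ^ 2) / (1 + y ^ 2) ^ n

lemma rationalWeight_inv (n : ℕ) {y : ℝ} (hy : y ≠ 0) :
    rationalWeight n y⁻¹ = -(y ^ (2 * n) * rationalWeight n y) / y ^ 2 := by
  have hsub : 1 - y⁻¹ ^ 2 = -(1 - y ^ 2) / y ^ 2 := by field_simp; ring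
  have hadd : 1 + y⁻¹ ^ 2 = (1 + y ^ 2) / y ^ 2 := by field_simp; ring
  rw [rationalWeight, rationalWeight, hsub, hadd, div_pow, pow_mul]
  field_simp

lemma integral_rpow_mul_rationalWeight_eq_neg (n : ℕ) (q : ℝ) :
    ∫ y in Ioi 0, y ^ q * rationalWeight n y =
      -∫ y in Ioi 0, y ^ (2 * n - 4 - q) * rationalWeight n y := by
  rw [← integral_comp_rpow_Ioi _ (neg_ne_zero.2 one_ne_zero), ← integral_neg]
  refine setIntegral_congr_fun measurableSet_Ioi fun y (hy : 0 < y) => ?_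
  have hexp : (2 * n - 4 - q : ℝ) = (2 * n : ℕ) + -(2 : ℕ) + -(2 : ℕ) + -q := by push_cast; ring
  have hexp' : (-1 - 1 : ℝ) = -(2 : ℕ) := by norm_num
  rw [rpow_neg_one, inv_rpow hy.le, rationalWeight_inv n hy.ne', hexp, hexp']
  simp only [rpow_add hy, rpow_neg hy.le, rpow_natCast, abs_neg, abs_one, one_mul, smul_eq_mul]
  field_simp

lemma rationalWeight_pos (n : ℕ) {y : ℝ} (hy0 : 0 ≤ y) (hy1 : y < 1) : 0 < rationalWeight n y :=
  div_pos (by nlinarith) (by positivity)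

lemma rationalWeight_neg (n : ℕ) {y : ℝ} (hy : 1 < y) : rationalWeight n y < 0 :=
  div_neg_of_neg_of_pos (by nlinarith) (by positivity)

lemma abs_rationalWeight_le_one (n : ℕ) {y : ℝ} (hy0 : 0 ≤ y) (hy1 : y ≤ 1) :
    |rationalWeight n y| ≤ 1 := by
  rw [rationalWeight, abs_div, abs_of_nonneg (by nlinarith), abs_of_pos (by positivity),
    div_le_one (by positivity)]
  calc 1 - y ^ 2 ≤ 1 := by nlinarith
    _ ≤ (1 + y ^ 2) ^ n := one_le_pow₀ (by nlinarith)

lemma abs_rationalWeight_le_rpow (n : ℕ) {y : ℝ} (hy : 1 ≤ y) :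
    |rationalWeight n y| ≤ y ^ (2 - 2 * n : ℝ) := by
  have hy0 : 0 < y := by linarith
  have hexp : (2 * n : ℝ) = (2 * n : ℕ) := by push_cast; ring
  rw [rationalWeight, abs_div, abs_of_nonpos (by nlinarith), abs_of_pos (by positivity),
    rpow_sub hy0, rpow_two, hexp, rpow_natCast, pow_mul]
  gcongr
  · nlinarith
  · nlinarith

lemma integrableOn_rpow_mul_rationalWeight (n : ℕ) {q : ℝ} (hq : -1 < q) (hq' : q < 2 * n - 3) :
    IntegrableOn (fun y => y ^ q * rationalWeight n y) (Ioi 0) := by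
  have hmeas : AEStronglyMeasurable (fun y : ℝ => y ^ q * rationalWeight n y) := by
    unfold rationalWeight; fun_prop
  rw [← Ioc_union_Ioi_eq_Ioi zero_le_one]
  refine IntegrableOn.union ?_ ?_
  · have hpow : IntegrableOn (fun y : ℝ => y ^ q) (Ioc 0 1) :=
      (intervalIntegrable_iff_integrableOn_Ioc_of_le zero_le_one).1
        (intervalIntegral.intervalIntegrable_rpow' hq)
    refine hpow.mono' hmeas.restrict ?_
    filter_upwards [ae_restrict_mem measurableSet_Ioc] with y ⟨hy0, hy1⟩
    rw [norm_mul, norm_of_nonneg (rpow_nonneg hy0.le q)]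
    exact mul_le_of_le_one_right (rpow_nonneg hy0.le q) (abs_rationalWeight_le_one n hy0.le hy1)
  · have hpow : IntegrableOn (fun y : ℝ => y ^ (q + (2 - 2 * n))) (Ioi 1) :=
      integrableOn_Ioi_rpow_of_lt (by linarith) one_pos
    refine hpow.mono' hmeas.restrict ?_
    filter_upwards [ae_restrict_mem measurableSet_Ioi] with y (hy : 1 < y)
    have hy0 : 0 < y := by linarith
    rw [norm_mul, norm_of_nonneg (rpow_nonneg hy0.le q), rpow_add hy0]
    exact mul_le_mul_of_nonneg_left (abs_rationalWeight_le_rpow n hy.le) (rpow_nonneg hy0.le q)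

lemma rpow_mul_rationalWeight_lt_of_lt (n : ℕ) {a b y : ℝ} (hab : a < b) (hy0 : 0 < y)
    (hy1 : y ≠ 1) : y ^ b * rationalWeight n y < y ^ a * rationalWeight n y := by
  rcases hy1.lt_or_gt with hy1 | hy1
  · exact mul_lt_mul_of_pos_right (rpow_lt_rpow_of_exponent_gt hy0 hy1 hab)
      (rationalWeight_pos n hy0.le hy1)
  · exact mul_lt_mul_of_neg_right (rpow_lt_rpow_of_exponent_lt hy1 hab) (rationalWeight_neg n hy1)

lemma integral_rpow_mul_rationalWeight_neg (n : ℕ) {q : ℝ} (hq : n - 2 < q)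
    (hq' : q < 2 * n - 3) : ∫ y in Ioi 0, y ^ q * rationalWeight n y < 0 := by
  set q' : ℝ := 2 * n - 4 - q
  have hint := integrableOn_rpow_mul_rationalWeight n (by linarith) hq'
  have hint' := integrableOn_rpow_mul_rationalWeight n (q := q') (by linarith) (by linarith)
  have hlt : ∀ y ∈ Ioi (0 : ℝ), y ≠ 1 → y ^ q * rationalWeight n y < y ^ q' * rationalWeight n y :=
    fun y hy hy1 => rpow_mul_rationalWeight_lt_of_lt n (by linarith) hy hy1
  have hpos : 0 < ∫ y in Ioi 0, (y ^ q' * rationalWeight n y - y ^ q * rationalWeight n y) := by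
    rw [setIntegral_pos_iff_support_of_nonneg_ae (f := fun y => _ - _) _ (hint'.sub hint)]
    · refine lt_of_lt_of_le (by simp) (measure_mono (s := Ioi 1) fun y (hy : 1 < y) => ?_)
      have hy0 : y ∈ Ioi (0 : ℝ) := lt_trans one_pos hy
      exact ⟨(sub_pos.2 (hlt y hy0 hy.ne')).ne', hy0⟩
    · filter_upwards [ae_restrict_mem measurableSet_Ioi] with y hy
      rcases eq_or_ne y 1 with rfl | hy1
      · simp [rationalWeight]
      · exact (sub_pos.2 (hlt y hy hy1)).le
  rw [integral_sub hint' hint] at hpos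
  linarith [integral_rpow_mul_rationalWeight_eq_neg n q]

section Radial

variable {E : Type*} [NormedAddCommGroup E] [NormedSpace ℝ E] [Nontrivial E] [FiniteDimensional ℝ E]

lemma rpow_mul_rationalWeight_radial (n : ℕ) (β : ℝ) :
    EqOn (fun y : ℝ => y ^ (finrank ℝ E - 1) • (y ^ β * rationalWeight n y))
      (fun y => y ^ (finrank ℝ E - 1 + β : ℝ) * rationalWeight n y) (Ioi 0) := by
  intro y (hy : 0 < y)
  dsimp only
  rw [smul_eq_mul, ← mul_assoc, ← rpow_natCast, ← rpow_add hy,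
    Nat.cast_sub finrank_pos, Nat.cast_one]

variable [MeasurableSpace E] [BorelSpace E] (μ : Measure E) [μ.IsAddHaarMeasure]

lemma integrable_norm_rpow_mul_rationalWeight (n : ℕ) {β : ℝ}
    (hβ : -(finrank ℝ E : ℝ) < β) (hβ' : β < 2 * n - 2 - finrank ℝ E) :
    Integrable (fun x : E => ‖x‖ ^ β * rationalWeight n ‖x‖) μ := by
  rw [integrable_fun_norm_addHaar μ (f := fun y => y ^ β * rationalWeight n y)]
  exact (integrableOn_rpow_mul_rationalWeight n (by linarith) (by linarith)).congr_fun
    (rpow_mul_rationalWeight_radial n β).symm measurableSet_Ioi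

lemma integral_norm_rpow_mul_rationalWeight_neg (n : ℕ) {β : ℝ}
    (hβ : n - 1 - finrank ℝ E < β) (hβ' : β < 2 * n - 2 - finrank ℝ E) :
    ∫ x, ‖x‖ ^ β * rationalWeight n ‖x‖ ∂μ < 0 := by
  rw [integral_fun_norm_addHaar μ (fun y => y ^ β * rationalWeight n y),
    setIntegral_congr_fun measurableSet_Ioi (rpow_mul_rationalWeight_radial n β)]
  have hball : 0 < μ.real (Metric.ball 0 1) :=
    ENNReal.toReal_pos (Metric.measure_ball_pos μ 0 one_pos).ne' measure_ball_lt_top.ne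
  have hradial := integral_rpow_mul_rationalWeight_neg n (q := finrank ℝ E - 1 + β)
    (by linarith) (by linarith)
  exact smul_neg_of_pos_of_neg finrank_pos (smul_neg_of_pos_of_neg hball hradial)

end Radial

theorem stmt_6_general (N : ℕ) (β : ℝ) (hβ : 0 < β) (hβ' : β < (N : ℝ) - 4) :
    Integrable (fun x : EuclideanSpace ℝ (Fin N) =>
        ‖x‖ ^ β * ((1 - ‖x‖ ^ 2) / (1 + ‖x‖ ^ 2) ^ (N + 1))) ∧
      (∫ x : EuclideanSpace ℝ (Fin N),
        ‖x‖ ^ β * ((1 - ‖x‖ ^ 2) / (1 + ‖x‖ ^ 2) ^ (N + 1))) < 0 := by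
  have : Nonempty (Fin N) := ⟨⟨0, by exact_mod_cast (show (0 : ℝ) < N by linarith)⟩⟩
  have hdim : (finrank ℝ (EuclideanSpace ℝ (Fin N)) : ℝ) = N := by simp
  constructor
  · exact integrable_norm_rpow_mul_rationalWeight volume (N + 1)
      (by rw [hdim]; linarith) (by push_cast [hdim]; linarith)
  · exact integral_norm_rpow_mul_rationalWeight_neg volume (N + 1)
      (by push_cast [hdim]; linarith) (by push_cast [hdim]; linarith)

theorem stmt_6 (N : ℕ) (hN : 5 ≤ N) (β : ℝ) (hβ : 0 < β) (hβ' : β < (N : ℝ) - 4) :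
    Integrable (fun x : EuclideanSpace ℝ (Fin N) =>
        ‖x‖ ^ β * ((1 - ‖x‖ ^ 2) / (1 + ‖x‖ ^ 2) ^ (N + 1))) ∧
      (∫ x : EuclideanSpace ℝ (Fin N),
        ‖x‖ ^ β * ((1 - ‖x‖ ^ 2) / (1 + ‖x‖ ^ 2) ^ (N + 1))) < 0 :=
  stmt_6_general N β hβ hβ'
end

section
/- Let N ≥ 5 and σ ∈ (0,1), and suppose K : ℝ^N → ℝ satisfies, near a point z ∈ ℝ^N, K(x) = K(z) + Σ_{i=1}^N a_i |x_i - z_i|^β + O(|x-z|^{β+σ}) with β ∈ (1, N-4). Then for y in a neighborhood of z and λ large, ∫_{ℝ^N} (K(x) - K(z)) · λ^N (1+λ²|x-y|²)^{-N} dx = O(λ^{-β} + |y - z|^β). -/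
/-!
Near `z` the expansion bounds `|K x - K z|` by a multiple of `‖x - z‖ ^ β`, the remainder being
of higher order; away from `z` the bound `2 M` does the same. Hence
`|K x - K z| ≤ c (‖x - y‖ ^ β + ‖y - z‖ ^ β)`. The substitution `u = l • (x - y)` turns the weight
into the profile `(1 + ‖u‖²) ^ (-N)`, so the first term integrates to `l ^ (-β)` times the `β`-th
moment of the profile, finite because `β < N`, and the second to a multiple of `‖y - z‖ ^ β`.
-/

open MeasureTheory Real Module

section Bubble

variable {E : Type*} [NormedAddCommGroup E] [NormedSpace ℝ E]

noncomputable def bubble (l : ℝ) (y x : E) : ℝ :=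
  l ^ (finrank ℝ E : ℝ) * (1 + l ^ 2 * ‖x - y‖ ^ 2) ^ (-(finrank ℝ E : ℝ))

lemma bubble_nonneg {l : ℝ} (hl : 0 ≤ l) (y x : E) : 0 ≤ bubble l y x := by
  unfold bubble; positivity

lemma norm_rpow_mul_bubble_eq {l : ℝ} (hl : 0 < l) (b : ℝ) (y x : E) :
    ‖x - y‖ ^ b * bubble l y x =
      l ^ (finrank ℝ E : ℝ) * l ^ (-b) * (‖l • (x - y)‖ ^ b * bubble 1 0 (l • (x - y))) := by
  have hlb : l ^ (-b) * l ^ b = 1 := by rw [← rpow_add hl]; simp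
  simp only [bubble, norm_smul, norm_of_nonneg hl.le, one_rpow, one_pow, one_mul, sub_zero,
    mul_rpow hl.le (norm_nonneg _), mul_pow]
  linear_combination (-‖x - y‖ ^ b * l ^ (finrank ℝ E : ℝ) *
    (1 + l ^ 2 * ‖x - y‖ ^ 2) ^ (-(finrank ℝ E : ℝ))) * hlb

variable [FiniteDimensional ℝ E] [MeasurableSpace E] [BorelSpace E] (μ : Measure E)
  [μ.IsAddHaarMeasure]

lemma integrable_norm_rpow_mul_bubble_one {b : ℝ} (hb : 0 ≤ b) (hbn : b < finrank ℝ E) :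
    Integrable (fun u : E ↦ ‖u‖ ^ b * bubble 1 0 u) μ := by
  have hr : (finrank ℝ E : ℝ) < 2 * finrank ℝ E - b := by linarith
  refine (integrable_rpow_neg_one_add_norm_sq (μ := μ) hr).mono' (by unfold bubble; fun_prop)
    (.of_forall fun u ↦ ?_)
  have hpos : (0 : ℝ) < 1 + ‖u‖ ^ 2 := by positivity
  have hnorm : ‖u‖ ^ b ≤ (1 + ‖u‖ ^ 2) ^ (b / 2) := by
    rw [show ‖u‖ ^ b = (‖u‖ ^ 2) ^ (b / 2) by
      rw [← rpow_natCast, ← rpow_mul (norm_nonneg u)]; ring_nf]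
    exact rpow_le_rpow (by positivity) (by linarith) (by linarith)
  simp only [bubble, one_rpow, one_pow, one_mul, sub_zero]
  rw [norm_of_nonneg (by positivity)]
  calc ‖u‖ ^ b * (1 + ‖u‖ ^ 2) ^ (-(finrank ℝ E : ℝ))
      ≤ (1 + ‖u‖ ^ 2) ^ (b / 2) * (1 + ‖u‖ ^ 2) ^ (-(finrank ℝ E : ℝ)) := by gcongr
    _ = (1 + ‖u‖ ^ 2) ^ (-(2 * finrank ℝ E - b) / 2) := by rw [← rpow_add hpos]; ring_nf

lemma integrable_norm_sub_rpow_mul_bubble {b : ℝ} (hb : 0 ≤ b) (hbn : b < finrank ℝ E)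
    {l : ℝ} (hl : 0 < l) (y : E) :
    Integrable (fun x ↦ ‖x - y‖ ^ b * bubble l y x) μ := by
  simp_rw [norm_rpow_mul_bubble_eq hl]
  exact (((integrable_norm_rpow_mul_bubble_one μ hb hbn).comp_smul hl.ne').comp_sub_right
    y).const_mul _

lemma integral_norm_sub_rpow_mul_bubble {l : ℝ} (hl : 0 < l) (b : ℝ) (y : E) :
    ∫ x, ‖x - y‖ ^ b * bubble l y x ∂μ = l ^ (-b) * ∫ u, ‖u‖ ^ b * bubble 1 0 u ∂μ := by
  simp_rw [norm_rpow_mul_bubble_eq hl]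
  rw [integral_const_mul,
    integral_sub_right_eq_self (fun v ↦ ‖l • v‖ ^ b * bubble 1 0 (l • v)) y,
    Measure.integral_comp_smul μ (fun u ↦ ‖u‖ ^ b * bubble 1 0 u), smul_eq_mul,
    abs_of_nonneg (by positivity), ← rpow_natCast]
  field_simp

lemma abs_integral_mul_bubble_le {b : ℝ} (hb : 0 ≤ b) (hbn : b < finrank ℝ E) {l : ℝ}
    (hl : 0 < l) {y : E} {g : E → ℝ} {A B : ℝ} (hg : ∀ x, |g x| ≤ A * ‖x - y‖ ^ b + B) :
    |∫ x, g x * bubble l y x ∂μ| ≤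
      A * l ^ (-b) * ∫ u, ‖u‖ ^ b * bubble 1 0 u ∂μ + B * ∫ u, bubble 1 0 u ∂μ := by
  have hmoment := integrable_norm_sub_rpow_mul_bubble μ hb hbn hl y
  have hmass : Integrable (fun x ↦ bubble l y x) μ := by
    simpa using integrable_norm_sub_rpow_mul_bubble μ le_rfl (hb.trans_lt hbn) hl y
  calc |∫ x, g x * bubble l y x ∂μ| ≤ ∫ x, |g x| * bubble l y x ∂μ := by
        simpa only [abs_mul, abs_of_nonneg (bubble_nonneg hl.le y _)] using
          abs_integral_le_integral_abs (f := fun x ↦ g x * bubble l y x)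
    _ ≤ ∫ x, A * (‖x - y‖ ^ b * bubble l y x) + B * bubble l y x ∂μ := by
        refine integral_mono_of_nonneg (.of_forall fun x ↦ ?_)
          ((hmoment.const_mul A).add (hmass.const_mul B)) (.of_forall fun x ↦ ?_)
        · exact mul_nonneg (abs_nonneg _) (bubble_nonneg hl.le y x)
        · have := mul_le_mul_of_nonneg_right (hg x) (bubble_nonneg hl.le y x)
          linarith
    _ = A * l ^ (-b) * ∫ u, ‖u‖ ^ b * bubble 1 0 u ∂μ + B * ∫ u, bubble 1 0 u ∂μ := by
        rw [integral_add (hmoment.const_mul A) (hmass.const_mul B), integral_const_mul,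
          integral_const_mul, integral_norm_sub_rpow_mul_bubble μ hl, mul_assoc,
          show ∫ x, bubble l y x ∂μ = ∫ u, bubble 1 0 u ∂μ by
            simpa using integral_norm_sub_rpow_mul_bubble μ hl 0 y]

end Bubble

lemma norm_sub_rpow_le {F : Type*} [SeminormedAddCommGroup F] {p : ℝ} (hp : 1 ≤ p) (x y z : F) :
    ‖x - z‖ ^ p ≤ 2 ^ (p - 1) * (‖x - y‖ ^ p + ‖y - z‖ ^ p) :=
  calc ‖x - z‖ ^ p ≤ (‖x - y‖ + ‖y - z‖) ^ p := by
        gcongr; exact norm_sub_le_norm_sub_add_norm_sub x y z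
    _ ≤ 2 ^ (p - 1) * (‖x - y‖ ^ p + ‖y - z‖ ^ p) := by
        exact_mod_cast NNReal.rpow_add_le_mul_rpow_add_rpow ‖x - y‖₊ ‖y - z‖₊ hp

lemma abs_sum_mul_abs_rpow_le {ι : Type*} [Fintype ι] (a : ι → ℝ) (v : EuclideanSpace ℝ ι)
    {β : ℝ} (hβ : 0 ≤ β) : |∑ i, a i * |v i| ^ β| ≤ (∑ i, |a i|) * ‖v‖ ^ β := by
  rw [Finset.sum_mul]
  refine (Finset.abs_sum_le_sum_abs _ _).trans (Finset.sum_le_sum fun i _ ↦ ?_)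
  rw [abs_mul, abs_of_nonneg (rpow_nonneg (abs_nonneg _) _)]
  gcongr
  exact PiLp.norm_apply_le v i

lemma exists_abs_sub_le_mul_rpow {ι : Type*} [Fintype ι] {K : EuclideanSpace ℝ ι → ℝ}
    {z : EuclideanSpace ℝ ι} {a : ι → ℝ} {β σ r₀ C M : ℝ} (hβ : 0 ≤ β) (hσ : 0 ≤ σ)
    (hr₀ : 0 < r₀) (hC : 0 ≤ C)
    (hloc : ∀ x, ‖x - z‖ ≤ r₀ →
      |K x - K z - ∑ i, a i * |x i - z i| ^ β| ≤ C * ‖x - z‖ ^ (β + σ))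
    (hbd : ∀ x, |K x| ≤ M) :
    ∃ D, 0 ≤ D ∧ ∀ x, |K x - K z| ≤ D * ‖x - z‖ ^ β := by
  have hM : 0 ≤ M := (abs_nonneg _).trans (hbd z)
  refine ⟨∑ i, |a i| + C * r₀ ^ σ + 2 * M / r₀ ^ β, by positivity, fun x ↦ ?_⟩
  have hfar : 0 ≤ 2 * M / r₀ ^ β * ‖x - z‖ ^ β := by positivity
  rcases le_or_gt ‖x - z‖ r₀ with hx | hx
  · have hsum := abs_sum_mul_abs_rpow_le a (x - z) hβ
    simp only [PiLp.sub_apply] at hsum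
    have hrem : C * ‖x - z‖ ^ (β + σ) ≤ C * r₀ ^ σ * ‖x - z‖ ^ β := by
      rw [rpow_add_of_nonneg (norm_nonneg _) hβ hσ, mul_comm (‖x - z‖ ^ β), ← mul_assoc]
      gcongr
    linarith [hloc x hx, abs_sub_abs_le_abs_sub (K x - K z) (∑ i, a i * |x i - z i| ^ β)]
  · have hbound : |K x - K z| ≤ 2 * M := by
      linarith [abs_sub (K x) (K z), hbd x, hbd z]
    have hscale : 2 * M ≤ 2 * M / r₀ ^ β * ‖x - z‖ ^ β := by
      rw [div_mul_eq_mul_div, le_div_iff₀ (by positivity)]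
      gcongr
    have hnear : 0 ≤ (∑ i, |a i| + C * r₀ ^ σ) * ‖x - z‖ ^ β := by positivity
    linarith

theorem stmt_17_general (N : ℕ) (σ β : ℝ) (hσ : 0 < σ)
    (hβ : 1 < β) (hβ' : β < (N : ℝ) - 4)
    (K : EuclideanSpace ℝ (Fin N) → ℝ) (z : EuclideanSpace ℝ (Fin N))
    (a : Fin N → ℝ) (r₀ C M : ℝ) (hr₀ : 0 < r₀) (hC : 0 < C)
    (hloc : ∀ x, ‖x - z‖ ≤ r₀ →
      |K x - K z - ∑ i, a i * |x i - z i| ^ β| ≤ C * ‖x - z‖ ^ (β + σ))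
    (hbd : ∀ x, |K x| ≤ M) :
    ∃ μ C' Λ : ℝ, 0 < μ ∧ 0 < C' ∧ 0 < Λ ∧
      ∀ (y : EuclideanSpace ℝ (Fin N)) (l : ℝ), ‖y - z‖ ≤ μ → Λ ≤ l →
        |∫ x, (K x - K z) * (l ^ (N : ℝ) * (1 + l ^ 2 * ‖x - y‖ ^ 2) ^ (-(N : ℝ)))| ≤
          C' * (l ^ (-β) + ‖y - z‖ ^ β) := by
  obtain ⟨D, hD, hK⟩ := exists_abs_sub_le_mul_rpow (by linarith) hσ.le hr₀ hC.le hloc hbd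
  have hβN : β < finrank ℝ (EuclideanSpace ℝ (Fin N)) := by
    rw [finrank_euclideanSpace_fin]; linarith
  set J₀ := ∫ u : EuclideanSpace ℝ (Fin N), bubble 1 0 u with hJ₀
  set Jβ := ∫ u : EuclideanSpace ℝ (Fin N), ‖u‖ ^ β * bubble 1 0 u with hJβ
  have hJ₀_nonneg : 0 ≤ J₀ := integral_nonneg fun u ↦ bubble_nonneg zero_le_one 0 u
  have hJβ_nonneg : 0 ≤ Jβ :=
    integral_nonneg fun u ↦ mul_nonneg (by positivity) (bubble_nonneg zero_le_one 0 u)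
  set c := D * 2 ^ (β - 1)
  have hc : 0 ≤ c := by positivity
  refine ⟨1, c * (Jβ + J₀) + 1, 1, one_pos, by positivity, one_pos, fun y l _ hl ↦ ?_⟩
  have hl₀ : 0 < l := one_pos.trans_le hl
  have hsplit (x : EuclideanSpace ℝ (Fin N)) :
      |K x - K z| ≤ c * ‖x - y‖ ^ β + c * ‖y - z‖ ^ β := by
    linarith [hK x, mul_le_mul_of_nonneg_left (norm_sub_rpow_le hβ.le x y z) hD]
  have hintegrand :
      (fun x ↦ (K x - K z) * (l ^ (N : ℝ) * (1 + l ^ 2 * ‖x - y‖ ^ 2) ^ (-(N : ℝ)))) =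
        fun x ↦ (K x - K z) * bubble l y x := by
    simp only [bubble, finrank_euclideanSpace_fin]
  rw [hintegrand]
  refine (abs_integral_mul_bubble_le volume (by linarith) hβN hl₀ hsplit).trans ?_
  rw [← hJ₀, ← hJβ]
  have hl_rpow : 0 ≤ l ^ (-β) := by positivity
  have hyz_rpow : 0 ≤ ‖y - z‖ ^ β := by positivity
  nlinarith [mul_nonneg (mul_nonneg hc hJ₀_nonneg) hl_rpow,
    mul_nonneg (mul_nonneg hc hJβ_nonneg) hyz_rpow]

theorem stmt_17 (N : ℕ) (hN : 5 ≤ N) (σ β : ℝ) (hσ : 0 < σ) (hσ' : σ < 1)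
    (hβ : 1 < β) (hβ' : β < (N : ℝ) - 4)
    (K : EuclideanSpace ℝ (Fin N) → ℝ) (z : EuclideanSpace ℝ (Fin N))
    (a : Fin N → ℝ) (r₀ C M : ℝ) (hr₀ : 0 < r₀) (hC : 0 < C)
    (hloc : ∀ x, ‖x - z‖ ≤ r₀ →
      |K x - K z - ∑ i, a i * |x i - z i| ^ β| ≤ C * ‖x - z‖ ^ (β + σ))
    (hbd : ∀ x, |K x| ≤ M) :
    ∃ μ C' Λ : ℝ, 0 < μ ∧ 0 < C' ∧ 0 < Λ ∧
      ∀ (y : EuclideanSpace ℝ (Fin N)) (l : ℝ), ‖y - z‖ ≤ μ → Λ ≤ l →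
        |∫ x, (K x - K z) * (l ^ (N : ℝ) * (1 + l ^ 2 * ‖x - y‖ ^ 2) ^ (-(N : ℝ)))| ≤
          C' * (l ^ (-β) + ‖y - z‖ ^ β) :=
  stmt_17_general N σ β hσ hβ hβ' K z a r₀ C M hr₀ hC hloc hbd
end
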